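/- arXiv:0804.3970 — 2 statements merged into one kernel-verified Lean document; each statement's English description precedes it below -/
import Mathlib

section
/- Under the hypotheses of the shadowing lemma for matrix sequences, the shadowing vector v is unique: if v, v' ∈ E₀ᵘ both satisfy |Aₙ⋯A₀v − vₙ₊₁| ≤ C_ε·exp(εn) and |Aₙ⋯A₀v' − vₙ₊₁| ≤ C_ε·exp(εn) for all ε > 0 (with ε < α) and all n, then v = v'. -/
/-!
Two shadowing vectors differ by `w ∈ E₀ᵘ` whose orbit stays within `(C₁ + C₂) exp(εn)` of zero,
by the triangle inequality through `vₙ₊₁`, while the expansion on `E₀ᵘ` makes it grow like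
`C⁻¹ exp(αn) ‖w‖`. Taking `ε < α` forces `‖w‖ = 0`.
-/

/-- The composition `A (n+k) ∘ A (n+k-1) ∘ ⋯ ∘ A n` of a sequence of continuous linear
operators. -/
noncomputable def opProd {E : Type*} [NormedAddCommGroup E] [NormedSpace ℝ E]
    (A : ℕ → E →L[ℝ] E) : ℕ → ℕ → (E →L[ℝ] E)
  | n, 0 => A n
  | n, k + 1 => (A (n + k + 1)).comp (opProd A n k)

open Real Filter Topology

theorem eq_zero_of_mul_exp_le_mul_exp {c K α β x : ℝ} (hc : 0 < c) (hβα : β < α) (hx : 0 ≤ x)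
    (hgrowth : ∀ n : ℕ, c * exp (α * n) * x ≤ K * exp (β * n)) : x = 0 := by
  have hdecay : ∀ n : ℕ, x ≤ K / c * exp (-(α - β) * n) := fun n => calc
    x = c * exp (α * n) * x / (c * exp (α * n)) := by field_simp
    _ ≤ K * exp (β * n) / (c * exp (α * n)) :=
      div_le_div_of_nonneg_right (hgrowth n) (by positivity)
    _ = K / c * exp (-(α - β) * n) := by
      rw [show -(α - β) * n = β * n - α * n by ring, exp_sub]; ring
  have hlim : Tendsto (fun n : ℕ => K / c * exp (-(α - β) * n)) atTop (𝓝 0) := by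
    simpa using ((tendsto_exp_atBot.comp ((tendsto_id.const_mul_atTop_of_neg
      (by linarith : -(α - β) < 0)))).comp tendsto_natCast_atTop_atTop).const_mul (K / c)
  exact le_antisymm (ge_of_tendsto' hlim hdecay) hx

/-- Uniqueness of the shadowing vector: if `v, v' ∈ E₀ᵘ` both shadow the same sequence
`(vₙ)` with subexponential error `C_ε exp(εn)` for every `0 < ε < α`, and the products
`Aₙ⋯A₀` expand `E₀ᵘ` at exponential rate `α` (i.e. `|Aₙ⋯A₀ w| ≥ C⁻¹ exp(αn)|w|` for
`w ∈ E₀ᵘ`), then `v = v'`. -/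
theorem shadowing_unique (m : ℕ)
    (A : ℕ → EuclideanSpace ℝ (Fin m) →L[ℝ] EuclideanSpace ℝ (Fin m))
    (Eu0 : Submodule ℝ (EuclideanSpace ℝ (Fin m)))
    (C α : ℝ) (hC : 0 < C) (hα : 0 < α)
    (hexp : ∀ n : ℕ, ∀ w ∈ Eu0, C⁻¹ * Real.exp (α * n) * ‖w‖ ≤ ‖opProd A 0 n w‖)
    (vseq : ℕ → EuclideanSpace ℝ (Fin m))
    (v v' : EuclideanSpace ℝ (Fin m)) (hv : v ∈ Eu0) (hv' : v' ∈ Eu0)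
    (hshadow : ∀ ε, 0 < ε → ε < α → ∃ Cε > (0:ℝ), ∀ n : ℕ,
      ‖opProd A 0 n v - vseq (n + 1)‖ ≤ Cε * Real.exp (ε * n))
    (hshadow' : ∀ ε, 0 < ε → ε < α → ∃ Cε > (0:ℝ), ∀ n : ℕ,
      ‖opProd A 0 n v' - vseq (n + 1)‖ ≤ Cε * Real.exp (ε * n)) :
    v = v' := by
  obtain ⟨C₁, -, h₁⟩ := hshadow (α / 2) (by linarith) (by linarith)
  obtain ⟨C₂, -, h₂⟩ := hshadow' (α / 2) (by linarith) (by linarith)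
  have hgrowth : ∀ n : ℕ, C⁻¹ * exp (α * n) * ‖v - v'‖ ≤ (C₁ + C₂) * exp (α / 2 * n) :=
    fun n => calc
      _ ≤ ‖opProd A 0 n (v - v')‖ := hexp n _ (Eu0.sub_mem hv hv')
      _ = ‖(opProd A 0 n v - vseq (n + 1)) - (opProd A 0 n v' - vseq (n + 1))‖ := by
        rw [map_sub, sub_sub_sub_cancel_right]
      _ ≤ _ := by rw [add_mul]; exact norm_sub_le_of_le (h₁ n) (h₂ n)
  have hnorm := eq_zero_of_mul_exp_le_mul_exp (inv_pos.2 hC) (by linarith) (norm_nonneg _) hgrowth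
  exact sub_eq_zero.1 (norm_eq_zero.1 hnorm)
end

section
/- Let γ : ℝ₊ → ℝ₊ be such that for each n, a flow-arc of 'level n' decomposes as a disjoint union γ = ⊔_{l ≤ n₀} ⊔_{k=1}^{M_l} γ_{l,k} where for every ε > 0, M_l ≤ C_ε exp(ε|l|) and each piece satisfies |Φ(γ_{l,k})| ≤ C_ε exp((θ+ε)l) while ν(γ_{l,k}) ≥ c_ε exp((θ₁−ε)l) with θ₁ ≥ θ > 0. Then for every ε > 0 there exists K_ε with |Φ(γ)| ≤ K_ε · ν(γ)^{θ/θ₁ − ε} whenever ν(γ) ≤ 1. -/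
private lemma aux_exp_bound (θ ε' x N : ℝ) (hθ : 0 < θ) (hε : 0 < ε') (hx : x ≤ N) :
    ε' * |x| + (θ + ε') * x + θ * (N - x) ≤ (θ + 2*ε') * max N 0 + θ * min N 0 := by
  rcases abs_cases x with ⟨h1, h2⟩ | ⟨h1, h2⟩
  · have hN : (0:ℝ) ≤ N := le_trans h2 hx
    rw [max_eq_left hN, min_eq_right hN, h1]
    nlinarith
  · rcases le_total 0 N with hN | hN
    · rw [max_eq_left hN, min_eq_right hN, h1]
      nlinarith
    · rw [max_eq_right hN, min_eq_left hN, h1]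
      nlinarith

set_option maxHeartbeats 1000000 in
/-- Abstract Hölder estimate for finitely-additive measures on flow arcs. Suppose
`Φ, ν : A → ℝ` are set functions on a collection `A` of arcs, `θ₁ ≥ θ > 0`, and for
every `ε > 0` there are constants `C_ε, c_ε > 0` such that every arc `γ` admits a
decomposition `Φ(γ) = Σ_{j} Σ_{k < M(n₀ − j)} Φ(γ_{n₀−j,k})` into Markov arcs of
levels `l = n₀ − j`, `j ∈ ℕ`, with at most `M l ≤ C_ε exp(ε|l|)` arcs at level `l`,
`|Φ(γ_{l,k})| ≤ C_ε exp((θ+ε)l)` for each piece, and `ν(γ) ≥ c_ε exp((θ₁−ε)n₀)`.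
Then for every `ε > 0` there is `K_ε > 0` with `|Φ(γ)| ≤ K_ε · ν(γ)^{θ/θ₁−ε}` whenever
`ν(γ) ≤ 1`. -/
theorem abstract_hoelder_estimate {A : Type*} (Φ ν : A → ℝ)
    (θ θ₁ : ℝ) (hθ : 0 < θ) (hθθ₁ : θ ≤ θ₁)
    (hdec : ∀ ε > (0:ℝ), ∃ Cε > (0:ℝ), ∃ cε > (0:ℝ), ∀ γ : A,
      ∃ (n₀ : ℤ) (M : ℤ → ℕ) (piece : ℤ → ℕ → A),
        (∀ l : ℤ, (M l : ℝ) ≤ Cε * Real.exp (ε * |(l : ℝ)|)) ∧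
        (∀ (l : ℤ) (k : ℕ), |Φ (piece l k)| ≤ Cε * Real.exp ((θ + ε) * l)) ∧
        (Φ γ = ∑' j : ℕ, ∑ k ∈ Finset.range (M (n₀ - j)), Φ (piece (n₀ - j) k)) ∧
        cε * Real.exp ((θ₁ - ε) * n₀) ≤ ν γ) :
    ∀ ε > (0:ℝ), ∃ Kε > (0:ℝ), ∀ γ : A, ν γ ≤ 1 →
      |Φ γ| ≤ Kε * (ν γ) ^ (θ / θ₁ - ε) := by
  intro ε hε
  have hθ₁ : 0 < θ₁ := lt_of_lt_of_le hθ hθθ₁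
  set ε' : ℝ := θ₁ / 2 with hε'def
  have hε'pos : 0 < ε' := by positivity
  obtain ⟨C, hC, c, hc, hdec'⟩ := hdec ε' hε'pos
  clear_value ε'
  set α : ℝ := θ / θ₁ - ε with hαdef
  clear_value α
  set r : ℝ := Real.exp (-θ) with hrdef
  clear_value r
  have hr0 : 0 ≤ r := hrdef ▸ (Real.exp_pos _).le
  have hr1 : r < 1 := by
    rw [hrdef, show (1:ℝ) = Real.exp 0 from Real.exp_zero.symm]
    exact Real.exp_lt_exp.mpr (by linarith)
  set S : ℝ := (1 - r)⁻¹ with hSdef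
  clear_value S
  have hS : 0 < S := by
    have h1r : 0 < 1 - r := by linarith
    rw [hSdef]; positivity
  set B : ℝ := Real.exp ((θ + 2*ε') * max 0 (-Real.log c / ε')) with hBdef
  clear_value B
  have hB1 : 1 ≤ B := by
    rw [hBdef, show (1:ℝ) = Real.exp 0 from Real.exp_zero.symm]
    apply Real.exp_le_exp.mpr
    have h := le_max_left (0:ℝ) (-Real.log c / ε')
    nlinarith
  have hBpos : 0 < B := lt_of_lt_of_le one_pos hB1
  set cα : ℝ := c ^ (-α) with hcαdef
  clear_value cα
  have hcα : 0 < cα := hcαdef ▸ Real.rpow_pos_of_pos hc _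
  set B' : ℝ := B + cα + B * cα + 1 with hB'def
  clear_value B'
  have hB' : 0 < B' := by rw [hB'def]; positivity
  refine ⟨C ^ 2 * S * B', by positivity, ?_⟩
  intro γ hν1
  obtain ⟨n₀, M, piece, hM, hP, hsum, hν⟩ := hdec' γ
  have hθ₁ε' : θ₁ - ε' = ε' := by rw [hε'def]; ring
  rw [hθ₁ε'] at hν
  set N : ℝ := (n₀ : ℝ) with hNdef
  have hνpos : 0 < ν γ := lt_of_lt_of_le (by positivity) hν
  set E : ℝ := (θ + 2*ε') * max N 0 + θ * min N 0 with hEdef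
  clear_value E
  -- bound on each inner sum
  have hbound : ∀ j : ℕ,
      |∑ k ∈ Finset.range (M (n₀ - j)), Φ (piece (n₀ - j) k)| ≤ C ^ 2 * Real.exp E * r ^ j := by
    intro j
    have hl : ((n₀ - (j:ℤ) : ℤ) : ℝ) = N - j := by push_cast [hNdef]; ring
    calc |∑ k ∈ Finset.range (M (n₀ - j)), Φ (piece (n₀ - j) k)|
        ≤ ∑ k ∈ Finset.range (M (n₀ - j)), |Φ (piece (n₀ - j) k)| :=
          Finset.abs_sum_le_sum_abs _ _
      _ ≤ (M (n₀ - j) : ℝ) * (C * Real.exp ((θ + ε') * ((n₀ - (j:ℤ) : ℤ) : ℝ))) := by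
          have := Finset.sum_le_card_nsmul (Finset.range (M (n₀ - j)))
            (fun k => |Φ (piece (n₀ - j) k)|)
            (C * Real.exp ((θ + ε') * ((n₀ - (j:ℤ) : ℤ) : ℝ)))
            (fun k _ => hP _ k)
          simpa [nsmul_eq_mul] using this
      _ ≤ (C * Real.exp (ε' * |((n₀ - (j:ℤ) : ℤ) : ℝ)|)) *
            (C * Real.exp ((θ + ε') * ((n₀ - (j:ℤ) : ℤ) : ℝ))) := by
          apply mul_le_mul_of_nonneg_right (hM _)
          positivity
      _ ≤ C ^ 2 * Real.exp E * r ^ j := by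
          rw [hl]
          have key : ε' * |N - j| + (θ + ε') * (N - j) ≤ E + (-θ) * j := by
            have hx : N - (j:ℝ) ≤ N := by
              have : (0:ℝ) ≤ (j:ℝ) := Nat.cast_nonneg j
              linarith
            have haux := aux_exp_bound θ ε' (N - j) N hθ hε'pos hx
            have hNj : N - (N - (j:ℝ)) = (j:ℝ) := by ring
            rw [hNj] at haux
            rw [hEdef]
            linarith
          calc (C * Real.exp (ε' * |N - j|)) * (C * Real.exp ((θ + ε') * (N - j)))
              = C ^ 2 * Real.exp (ε' * |N - j| + (θ + ε') * (N - j)) := by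
                rw [Real.exp_add]; ring
            _ ≤ C ^ 2 * Real.exp (E + (-θ) * j) := by
                apply mul_le_mul_of_nonneg_left (Real.exp_le_exp.mpr key) (by positivity)
            _ = C ^ 2 * Real.exp E * r ^ j := by
                rw [Real.exp_add, hrdef,
                  show (-θ) * (j:ℝ) = (j:ℝ) * (-θ) by ring, Real.exp_nat_mul]
                ring
  -- summability
  have hg : Summable (fun j : ℕ => C ^ 2 * Real.exp E * r ^ j) :=
    (summable_geometric_of_lt_one hr0 hr1).mul_left _
  have habs : Summable (fun j : ℕ =>
      |∑ k ∈ Finset.range (M (n₀ - j)), Φ (piece (n₀ - j) k)|) :=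
    Summable.of_nonneg_of_le (fun j => abs_nonneg _) hbound hg
  have hΦbound : |Φ γ| ≤ C ^ 2 * Real.exp E * S := by
    rw [hsum]
    calc |∑' j : ℕ, ∑ k ∈ Finset.range (M (n₀ - j)), Φ (piece (n₀ - j) k)|
        ≤ ∑' j : ℕ, |∑ k ∈ Finset.range (M (n₀ - j)), Φ (piece (n₀ - j) k)| := by
          simpa [Real.norm_eq_abs] using norm_tsum_le_tsum_norm
            (f := fun j : ℕ => ∑ k ∈ Finset.range (M (n₀ - j)), Φ (piece (n₀ - j) k))
            (by simpa [Real.norm_eq_abs] using habs)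
      _ ≤ ∑' j : ℕ, C ^ 2 * Real.exp E * r ^ j := Summable.tsum_le_tsum hbound habs hg
      _ = C ^ 2 * Real.exp E * S := by
          rw [tsum_mul_left, tsum_geometric_of_lt_one hr0 hr1, hSdef]
  -- final estimate: exp E ≤ B' * (ν γ) ^ α
  have hfinal : Real.exp E ≤ B' * (ν γ) ^ α := by
    have hνα : 0 < (ν γ) ^ α := Real.rpow_pos_of_pos hνpos _
    have hBN : 0 ≤ N → Real.exp E ≤ B := by
      intro hN
      rw [hEdef, hBdef, min_eq_right hN, max_eq_left hN]
      apply Real.exp_le_exp.mpr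
      have h1 : c * Real.exp (ε' * N) ≤ 1 := le_trans hν hν1
      have he : Real.exp (ε' * N) * Real.exp (-(ε' * N)) = 1 := by
        rw [← Real.exp_add]; simp
      have h2 : c ≤ Real.exp (-(ε' * N)) := by
        nlinarith [Real.exp_pos (-(ε' * N)), Real.exp_pos (ε' * N)]
      have h3 : ε' * N ≤ -Real.log c := by
        have hlog := Real.log_le_log hc h2
        rw [Real.log_exp] at hlog
        linarith
      have h4 : N ≤ -Real.log c / ε' := by
        rw [le_div_iff₀ hε'pos]
        linarith [mul_comm ε' N]
      have h5 : N ≤ max 0 (-Real.log c / ε') := le_trans h4 (le_max_right _ _)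
      have h6 := mul_le_mul_of_nonneg_left h5 (by linarith : (0:ℝ) ≤ θ + 2*ε')
      linarith
    rcases le_or_gt 0 α with hα0 | hα0
    · rcases le_or_gt 0 N with hN | hN
      · -- N ≥ 0 : exp E ≤ B, ν^α ≥ c^α
        have hcν : c ≤ ν γ := by
          have h1 : (1:ℝ) ≤ Real.exp (ε' * N) := by
            rw [show (1:ℝ) = Real.exp 0 from Real.exp_zero.symm]
            exact Real.exp_le_exp.mpr (by positivity)
          nlinarith
        have h6 : c ^ α ≤ (ν γ) ^ α := Real.rpow_le_rpow hc.le hcν hα0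
        have h7 : cα * c ^ α = 1 := by
          rw [hcαdef, ← Real.rpow_add hc]
          simp
        have hcapos : 0 < c ^ α := Real.rpow_pos_of_pos hc _
        calc Real.exp E ≤ B := hBN hN
          _ = B * cα * c ^ α := by rw [mul_assoc, h7, mul_one]
          _ ≤ B * cα * (ν γ) ^ α := by
              apply mul_le_mul_of_nonneg_left h6 (by positivity)
          _ ≤ B' * (ν γ) ^ α := by
              apply mul_le_mul_of_nonneg_right _ hνα.le
              rw [hB'def]; nlinarith
      · -- N < 0 : exp E = exp (θ N) ≤ exp(ε' α N), and ν^α ≥ c^α exp(ε'N)^α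
        have hE : E = θ * N := by
          rw [hEdef, max_eq_right hN.le, min_eq_left hN.le]; ring
        have hεα : ε' * α ≤ θ := by
          have hd : θ / θ₁ * θ₁ = θ := div_mul_cancel₀ θ (ne_of_gt hθ₁)
          rw [hαdef, hε'def]
          nlinarith [div_nonneg hθ.le hθ₁.le]
        have h8 : Real.exp E ≤ Real.exp (ε' * N) ^ α := by
          rw [hE, ← Real.exp_mul]
          apply Real.exp_le_exp.mpr
          nlinarith
        have h9 : c ^ α * Real.exp (ε' * N) ^ α ≤ (ν γ) ^ α := by
          rw [← Real.mul_rpow hc.le (Real.exp_pos _).le]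
          exact Real.rpow_le_rpow (by positivity) hν hα0
        have h7 : cα * c ^ α = 1 := by
          rw [hcαdef, ← Real.rpow_add hc]
          simp
        have hexpα : 0 < Real.exp (ε' * N) ^ α := Real.rpow_pos_of_pos (Real.exp_pos _) _
        calc Real.exp E ≤ Real.exp (ε' * N) ^ α := h8
          _ = cα * (c ^ α * Real.exp (ε' * N) ^ α) := by
              rw [← mul_assoc, h7, one_mul]
          _ ≤ cα * (ν γ) ^ α := mul_le_mul_of_nonneg_left h9 hcα.le
          _ ≤ B' * (ν γ) ^ α := by
              apply mul_le_mul_of_nonneg_right _ hνα.le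
              rw [hB'def]; nlinarith
    · -- α < 0 : ν^α ≥ 1
      have h10 : 1 ≤ (ν γ) ^ α :=
        Real.one_le_rpow_of_pos_of_le_one_of_nonpos hνpos hν1 hα0.le
      have h11 : Real.exp E ≤ B := by
        rcases le_or_gt 0 N with hN | hN
        · exact hBN hN
        · have hE : E = θ * N := by
            rw [hEdef, max_eq_right hN.le, min_eq_left hN.le]; ring
          calc Real.exp E ≤ Real.exp 0 := Real.exp_le_exp.mpr (by rw [hE]; nlinarith)
            _ = 1 := Real.exp_zero
            _ ≤ B := hB1
      calc Real.exp E ≤ B := h11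
        _ = B * 1 := (mul_one B).symm
        _ ≤ B' * (ν γ) ^ α := by
            apply mul_le_mul (by rw [hB'def]; nlinarith) h10 zero_le_one hB'.le
  calc |Φ γ| ≤ C ^ 2 * Real.exp E * S := hΦbound
    _ = C ^ 2 * S * Real.exp E := by ring
    _ ≤ C ^ 2 * S * (B' * (ν γ) ^ α) := by
        apply mul_le_mul_of_nonneg_left hfinal (by positivity)
    _ = C ^ 2 * S * B' * (ν γ) ^ α := by ring
end
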